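/- arXiv:1101.3745 — 7 statements merged into one kernel-verified Lean document; each statement's English description precedes it below -/
import Mathlib

section
/- Let P be a vector space partition of an n-dimensional vector space V over the finite field F with q elements, where n ≥ 1, and let H be a hyperplane of V. Then ∑_{U ∈ P, U ⊆ H} q^{dim U} = |P| − 1; equivalently, if b_d denotes the number of members of P of dimension d contained in H and m_d the total number of members of dimension d, then ∑_{d=1}^{n} b_d q^d = (∑_{d=1}^{n} m_d) − 1. (The second packing condition.) -/
attribute [local instance] Classical.propDecidable

/-- A vector space partition: a finite set of nonzero subspaces such that every
nonzero vector lies in exactly one member. -/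
def IsVSPartition (F : Type*) {V : Type*} [Field F] [AddCommGroup V] [Module F V]
    (P : Finset (Submodule F V)) : Prop :=
  (∀ U ∈ P, U ≠ ⊥) ∧ ∀ v : V, v ≠ 0 → ∃! U : Submodule F V, U ∈ P ∧ v ∈ U

/-- The number `m_d` of members of `P` of dimension `d`. -/
noncomputable def dimCount (F : Type*) {V : Type*} [Field F] [AddCommGroup V] [Module F V]
    (P : Finset (Submodule F V)) (d : ℕ) : ℕ :=
  (P.filter fun (U : Submodule F V) => Module.finrank F ↥U = d).card

/-!
Counting the nonzero vectors of a subspace `W` through the members of `P` gives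
`|W| - 1 = ∑_{U ∈ P} (|U ∩ W| - 1)`. Apply this to `W = V` and `W = H`: since `|V| = q |H|`, and
`|U| = q |U ∩ H|` for every member `U ⊄ H`, the first identity minus `q` times the second reads
`(q - 1) ∑_{U ∈ P} (1 - [U ⊆ H] |U|) = q - 1`, which is the claim.
-/

section

open Finset

lemma Submodule.card_filter_mem_ne_zero {R M : Type*} [Semiring R] [AddCommMonoid M] [Module R M]
    [Fintype M] (W : Submodule R M) : #{v | v ∈ W ∧ v ≠ 0} = Nat.card W - 1 := by
  have hW : #{v | v ∈ W} = Nat.card W := by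
    rw [← Fintype.card_subtype, Nat.card_eq_fintype_card]
  rw [← hW, ← card_erase_of_mem (s := {v | v ∈ W}) (a := 0) (by simp)]
  congr 1
  ext v
  simp [and_comm]

variable {F V : Type*} [Field F] [AddCommGroup V] [Module F V]

lemma IsVSPartition.finrank_pos {P : Finset (Submodule F V)} (hP : IsVSPartition F P)
    {U : Submodule F V} (hU : U ∈ P) [FiniteDimensional F U] : 0 < Module.finrank F U := by
  have := Submodule.nontrivial_iff_ne_bot.mpr (hP.1 U hU)
  exact Module.finrank_pos

lemma IsVSPartition.natCard_sub_one_eq_sum [Finite V] {P : Finset (Submodule F V)}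
    (hP : IsVSPartition F P) (W : Submodule F V) :
    (Nat.card W : ℤ) - 1 = ∑ U ∈ P, ((Nat.card ↥(U ⊓ W) : ℤ) - 1) := by
  have := Fintype.ofFinite V
  have hcover : ({v | v ∈ W ∧ v ≠ 0} : Finset V)
      = P.biUnion fun U => {v | v ∈ U ⊓ W ∧ v ≠ 0} := by
    ext v
    simp only [mem_filter, mem_univ, true_and, mem_biUnion, Submodule.mem_inf]
    constructor
    · rintro ⟨hvW, hv⟩
      obtain ⟨U, ⟨hU, hvU⟩, -⟩ := hP.2 v hv
      exact ⟨U, hU, ⟨hvU, hvW⟩, hv⟩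
    · rintro ⟨U, -, ⟨-, hvW⟩, hv⟩
      exact ⟨hvW, hv⟩
  have hdisj : (P : Set (Submodule F V)).PairwiseDisjoint
      fun U => ({v | v ∈ U ⊓ W ∧ v ≠ 0} : Finset V) := by
    intro U hU U' hU' hne
    refine disjoint_left.mpr fun v hv hv' => hne ?_
    simp only [mem_filter, mem_univ, true_and, Submodule.mem_inf] at hv hv'
    exact (hP.2 v hv.2).unique ⟨hU, hv.1.1⟩ ⟨hU', hv'.1.1⟩
  have hcount := congrArg card hcover
  rw [card_biUnion hdisj] at hcount
  simp only [Submodule.card_filter_mem_ne_zero] at hcount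
  rw [← Nat.cast_pred Nat.card_pos, hcount, Nat.cast_sum]
  exact sum_congr rfl fun U _ => Nat.cast_pred Nat.card_pos

section Hyperplane

variable [FiniteDimensional F V] {H : Submodule F V}

lemma Submodule.finrank_inf_add_one_of_not_le
    (hH : Module.finrank F H + 1 = Module.finrank F V) {U : Submodule F V} (hU : ¬U ≤ H) :
    Module.finrank F ↥(U ⊓ H) + 1 = Module.finrank F U := by
  have hlt : Module.finrank F H < Module.finrank F ↥(U ⊔ H) :=
    Submodule.finrank_lt_finrank_of_lt (right_lt_sup.mpr hU)
  have hle := Submodule.finrank_le (U ⊔ H)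
  have hsum := Submodule.finrank_sup_add_finrank_inf_eq U H
  omega

lemma Submodule.natCard_eq_mul_natCard_inf_of_not_le [Finite F]
    (hH : Module.finrank F H + 1 = Module.finrank F V) {U : Submodule F V} (hU : ¬U ≤ H) :
    Nat.card U = Nat.card F * Nat.card ↥(U ⊓ H) := by
  rw [Module.natCard_eq_pow_finrank (K := F) (V := U),
    Module.natCard_eq_pow_finrank (K := F) (V := ↥(U ⊓ H)),
    ← Submodule.finrank_inf_add_one_of_not_le hH hU, pow_succ']

theorem IsVSPartition.sum_natCard_filter_le_add_one_eq_card [Finite F] {P : Finset (Submodule F V)}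
    (hP : IsVSPartition F P) (hH : Module.finrank F H + 1 = Module.finrank F V) :
    ∑ U ∈ P with U ≤ H, Nat.card U + 1 = #P := by
  have := Module.finite_of_finite F (M := V)
  set q : ℤ := (Nat.card F : ℤ)
  have htop : Nat.card (⊤ : Submodule F V) = Nat.card F * Nat.card H := by
    rw [Submodule.natCard_eq_mul_natCard_inf_of_not_le hH, top_inf_eq]
    intro hle
    have := Submodule.finrank_mono hle
    rw [finrank_top] at this
    omega
  have hterm : ∀ U ∈ P, ((Nat.card U : ℤ) - 1) - q * ((Nat.card ↥(U ⊓ H) : ℤ) - 1)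
      = (q - 1) * (1 - if U ≤ H then (Nat.card U : ℤ) else 0) := by
    intro U _
    by_cases hUH : U ≤ H
    · rw [inf_eq_left.mpr hUH, if_pos hUH]
      ring
    · rw [Submodule.natCard_eq_mul_natCard_inf_of_not_le hH hUH, if_neg hUH]
      push_cast
      ring
  have hsum : (q - 1) * ∑ U ∈ P, (1 - if U ≤ H then (Nat.card U : ℤ) else 0) = (q - 1) * 1 := by
    have hV := hP.natCard_sub_one_eq_sum ⊤
    simp only [inf_top_eq] at hV
    rw [mul_sum, ← sum_congr rfl hterm, sum_sub_distrib, ← mul_sum, ← hV,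
      ← hP.natCard_sub_one_eq_sum H, htop]
    push_cast
    ring
  have hq : q - 1 ≠ 0 := by
    have : 1 < Nat.card F := Finite.one_lt_card
    omega
  have hcancel := mul_left_cancel₀ hq hsum
  rw [sum_sub_distrib, sum_const, ← sum_filter] at hcancel
  have hint : ((∑ U ∈ P with U ≤ H, Nat.card U : ℕ) : ℤ) + 1 = #P := by
    push_cast
    simp only [nsmul_eq_mul, mul_one] at hcancel
    linarith
  exact_mod_cast hint

end Hyperplane

end

/-- The second packing condition. -/
theorem stmt1 (q n : ℕ) (hn : 1 ≤ n) (F V : Type*) [Field F] [Fintype F] [AddCommGroup V]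
    [Module F V] [FiniteDimensional F V] (hq : Fintype.card F = q)
    (hnV : Module.finrank F V = n)
    (P : Finset (Submodule F V)) (hP : IsVSPartition F P)
    (H : Submodule F V) (hH : Module.finrank F ↥H = n - 1) :
    (∑ U ∈ P.filter (fun (U : Submodule F V) => U ≤ H), q ^ Module.finrank F ↥U)
      = P.card - 1 ∧
    (∑ d ∈ Finset.Icc 1 n,
        (P.filter fun (U : Submodule F V) => Module.finrank F ↥U = d ∧ U ≤ H).card * q ^ d)
      = (∑ d ∈ Finset.Icc 1 n, dimCount F P d) - 1 := by
  have hHV : Module.finrank F H + 1 = Module.finrank F V := by omega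
  have hcard (U : Submodule F V) : Nat.card U = q ^ Module.finrank F U := by
    rw [Module.natCard_eq_pow_finrank (K := F), Nat.card_eq_fintype_card, hq]
  have hpacking : ∑ U ∈ P with U ≤ H, q ^ Module.finrank F U + 1 = P.card := by
    simpa only [hcard] using hP.sum_natCard_filter_le_add_one_eq_card hHV
  have hdim : ∀ U ∈ P, Module.finrank F U ∈ Finset.Icc 1 n := fun U hU =>
    Finset.mem_Icc.mpr ⟨hP.finrank_pos hU, hnV ▸ Submodule.finrank_le U⟩
  refine ⟨by omega, ?_⟩
  calc _ = ∑ U ∈ P with U ≤ H, q ^ Module.finrank F U := by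
        rw [← Finset.sum_fiberwise_of_maps_to' fun U hU => hdim U (Finset.mem_filter.mp hU).1]
        refine Finset.sum_congr rfl fun d _ => ?_
        rw [Finset.sum_const, smul_eq_mul, Finset.filter_filter]
        simp_rw [and_comm]
    _ = P.card - 1 := by omega
    _ = ∑ d ∈ Finset.Icc 1 n, dimCount F P d - 1 := by
        rw [Finset.card_eq_sum_card_fiberwise hdim]
        rfl
end

section
/- Let P be a vector space partition of an n-dimensional vector space V over the finite field F with q elements, let l ≥ 1, let d_1 < d_2 < … < d_l be integers in {1,…,n−1}, and let k_i be integers with 1 ≤ k_i ≤ m_{d_i} for each i. Let N be the number of tuples (H, 𝒰_1, …, 𝒰_l) where H is a hyperplane of V and, for each i, 𝒰_i is a k_i-element set of dimension-d_i members of P each of which is contained in H. Then (∏_{i=1}^{l} C(m_{d_i}, k_i)) · h(∑_{i=1}^{l} k_i d_i; n, q) ≤ N ≤ (∏_{i=1}^{l} C(m_{d_i}, k_i)) · h(d_min; n, q), where d_min = 2 d_l if k_l ≥ 2, d_min = d_l + d_{l−1} if k_l = 1 and l ≥ 2, and d_min = d_1 if l = 1 and k_1 = 1, and C(a,b) denotes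 the binomial coefficient. -/
attribute [local instance] Classical.propDecidable

/-- The function `h(e; n, q)`. -/
def hFun (q e n : ℕ) : ℕ := if e ≤ n then (q ^ (n - e) - 1) / (q - 1) else 0


/-!
Sort the tuples `(H, 𝒰₁, …, 𝒰ₗ)` by `u = (𝒰₁, …, 𝒰ₗ)`. The hyperplanes containing all members of
`u` are those containing their span `W`, and there are `h(dim W; n, q)` of them: nonzero
functionals vanishing on `W` map onto them via `ker`, with fibres of size `q - 1`. Since `h` is
antitone in its first argument, it remains to bound `dim W`: from above by `∑ kᵢ dᵢ`, and from
below because distinct members of a partition meet trivially, so two of them span a space of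
dimension the sum of theirs.
-/

open Module Finset

theorem hFun_le_hFun_of_le {q : ℕ} (hq : 1 ≤ q) {e e' : ℕ} (n : ℕ) (h : e ≤ e') :
    hFun q e' n ≤ hFun q e n := by
  unfold hFun
  by_cases he' : e' ≤ n
  · rw [if_pos he', if_pos (h.trans he')]
    exact Nat.div_le_div_right (Nat.sub_le_sub_right (Nat.pow_le_pow_right hq (by omega)) 1)
  · rw [if_neg he']
    exact Nat.zero_le _

theorem Submodule.natCard_mem_ne_zero {R M : Type*} [Semiring R] [AddCommMonoid M] [Module R M]
    (S : Submodule R M) : Nat.card {x // x ∈ S ∧ x ≠ 0} = Nat.card S - 1 := by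
  change Nat.card ↥((S : Set M) \ {0}) = _
  rw [Nat.card_coe_set_eq, Set.ncard_sdiff_singleton_of_mem S.zero_mem, ← Nat.card_coe_set_eq]
  rfl

section Hyperplanes

variable {F V : Type*} [Field F] [AddCommGroup V] [Module F V] [FiniteDimensional F V]

theorem natCard_dualAnnihilator_ne_zero [Finite F] (W : Submodule F V) :
    Nat.card {f : Dual F V // f ∈ W.dualAnnihilator ∧ f ≠ 0} =
      Nat.card F ^ (finrank F V - finrank F W) - 1 := by
  rw [Submodule.natCard_mem_ne_zero, Module.natCard_eq_pow_finrank (K := F),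
    ← Subspace.finrank_add_finrank_dualAnnihilator_eq W, Nat.add_sub_cancel_left]

theorem ker_eq_of_mem_dualAnnihilator {H : Submodule F V} (hH : finrank F H + 1 = finrank F V)
    {f : Dual F V} (hf : f ∈ H.dualAnnihilator) (hf0 : f ≠ 0) : LinearMap.ker f = H :=
  (Submodule.eq_of_le_of_finrank_eq (fun w hw => (Submodule.mem_dualAnnihilator f).1 hf w hw)
    (by have := Module.Dual.finrank_ker_add_one_of_ne_zero hf0; omega)).symm

theorem natCard_hyperplanes_containing_mul [Finite F] (W : Submodule F V) (hV : 0 < finrank F V) :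
    Nat.card {H : Submodule F V // finrank F H = finrank F V - 1 ∧ W ≤ H} * (Nat.card F - 1) =
      Nat.card F ^ (finrank F V - finrank F W) - 1 := by
  have : Finite V := Module.finite_of_finite F
  have : Finite (Dual F V) := Module.finite_of_finite F
  let Hyp := {H : Submodule F V // finrank F H = finrank F V - 1 ∧ W ≤ H}
  have : Fintype Hyp := Fintype.ofFinite Hyp
  let ker : {f : Dual F V // f ∈ W.dualAnnihilator ∧ f ≠ 0} → Hyp := fun f =>
    ⟨LinearMap.ker f.1, by have := Module.Dual.finrank_ker_add_one_of_ne_zero f.2.2; omega,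
      fun w hw => (Submodule.mem_dualAnnihilator f.1).1 f.2.1 w hw⟩
  -- the fibre of `ker` over `H` consists of the nonzero functionals vanishing on `H`
  have fibre (H : Hyp) : Nat.card {f // ker f = H} = Nat.card F - 1 := by
    have hH : finrank F H.1 + 1 = finrank F V := by have := H.2.1; omega
    have hsub : finrank F V - finrank F H.1 = 1 := by omega
    refine (Nat.card_congr ((Equiv.subtypeEquivRight fun _ => Subtype.ext_iff).trans
      ((Equiv.subtypeSubtypeEquivSubtypeInter (fun g : Dual F V => g ∈ W.dualAnnihilator ∧ g ≠ 0)
        (fun g => LinearMap.ker g = H.1)).trans (Equiv.subtypeEquivRight fun f => ?_)))).trans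
      ((natCard_dualAnnihilator_ne_zero H.1).trans (by rw [hsub, pow_one]))
    constructor
    · rintro ⟨⟨-, hf0⟩, hker⟩
      refine ⟨(Submodule.mem_dualAnnihilator f).2 fun w hw => ?_, hf0⟩
      rw [← hker] at hw
      exact hw
    · rintro ⟨hf, hf0⟩
      exact ⟨⟨Submodule.dualAnnihilator_anti H.2.2 hf, hf0⟩,
        ker_eq_of_mem_dualAnnihilator hH hf hf0⟩
  rw [← natCard_dualAnnihilator_ne_zero, ← Nat.card_congr (Equiv.sigmaFiberEquiv ker),
    Nat.card_sigma]
  simp only [fibre, Finset.sum_const, Finset.card_univ, smul_eq_mul, Nat.card_eq_fintype_card]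
  rfl

theorem natCard_hyperplanes_containing [Finite F] (W : Submodule F V) (hV : 0 < finrank F V) :
    Nat.card {H : Submodule F V // finrank F H = finrank F V - 1 ∧ W ≤ H} =
      hFun (Nat.card F) (finrank F W) (finrank F V) := by
  rw [hFun, if_pos W.finrank_le]
  have : 1 < Nat.card F := Finite.one_lt_card
  exact (Nat.div_eq_of_eq_mul_left (by omega) (natCard_hyperplanes_containing_mul W hV).symm).symm

end Hyperplanes

section PartitionTuples

variable {F V ι : Type*} [Field F] [AddCommGroup V] [Module F V] [Fintype ι]

noncomputable def partTuples (P : Finset (Submodule F V)) (d k : ι → ℕ) :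
    Finset (ι → Finset (Submodule F V)) :=
  Fintype.piFinset fun i => (P.filter fun U : Submodule F V => finrank F U = d i).powersetCard (k i)

def tupleSpan (u : ι → Finset (Submodule F V)) : Submodule F V :=
  univ.sup fun i => (u i).sup id

variable {P : Finset (Submodule F V)} {d k : ι → ℕ} {u : ι → Finset (Submodule F V)}

theorem mem_partTuples : u ∈ partTuples P d k ↔
    ∀ i, (u i).card = k i ∧ ∀ U ∈ u i, U ∈ P ∧ finrank F U = d i := by
  simp only [partTuples, Fintype.mem_piFinset, mem_powersetCard, subset_iff, mem_filter]
  exact forall_congr' fun i => and_comm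

theorem card_partTuples : (partTuples P d k).card = ∏ i, (dimCount F P (d i)).choose (k i) := by
  simp only [partTuples, Fintype.card_piFinset, card_powersetCard]
  rfl

theorem tupleSpan_le_iff {H : Submodule F V} : tupleSpan u ≤ H ↔ ∀ i, ∀ U ∈ u i, U ≤ H := by
  simp only [tupleSpan, Finset.sup_le_iff, mem_univ, true_implies, id_eq]

theorem le_tupleSpan {i : ι} {U : Submodule F V} (hU : U ∈ u i) : U ≤ tupleSpan u :=
  tupleSpan_le_iff.1 le_rfl i U hU

theorem IsVSPartition.disjoint (hP : IsVSPartition F P) {U U' : Submodule F V} (hU : U ∈ P)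
    (hU' : U' ∈ P) (hne : U ≠ U') : Disjoint U U' := by
  rw [Submodule.disjoint_def]
  intro v hv hv'
  by_contra hv0
  exact hne ((hP.2 v hv0).unique ⟨hU, hv⟩ ⟨hU', hv'⟩)

theorem nonempty_of_mem_partTuples (hu : u ∈ partTuples P d k) {i : ι} (hk : 0 < k i) :
    (u i).Nonempty :=
  card_pos.1 ((mem_partTuples.1 hu i).1 ▸ hk)

theorem tupleSpan_ne_bot (hP : IsVSPartition F P) (hu : u ∈ partTuples P d k) {i : ι}
    (hk : 0 < k i) : tupleSpan u ≠ ⊥ := by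
  obtain ⟨U, hU⟩ := nonempty_of_mem_partTuples hu hk
  exact fun h => hP.1 U ((mem_partTuples.1 hu i).2 U hU).1 (eq_bot_iff.2 (h ▸ le_tupleSpan hU))

variable [FiniteDimensional F V]

theorem Submodule.finrank_finset_sup_le {α : Type*} (s : Finset α) (f : α → Submodule F V) :
    finrank F ↥(s.sup f) ≤ ∑ a ∈ s, finrank F (f a) := by
  induction s using Finset.cons_induction with
  | empty => simp
  | cons a s ha ih =>
    rw [sup_cons, sum_cons]
    exact (Submodule.finrank_add_le_finrank_add_finrank _ _).trans (by omega)

theorem finrank_tupleSpan_le (hu : u ∈ partTuples P d k) :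
    finrank F (tupleSpan u) ≤ ∑ i, k i * d i := by
  rw [mem_partTuples] at hu
  calc finrank F (tupleSpan u) ≤ ∑ i, finrank F ↥((u i).sup id) :=
        Submodule.finrank_finset_sup_le _ _
    _ ≤ ∑ i, ∑ U ∈ u i, finrank F U :=
        sum_le_sum fun i _ => Submodule.finrank_finset_sup_le _ _
    _ = ∑ i, k i * d i := sum_congr rfl fun i _ => by
        rw [sum_congr rfl fun U hU => ((hu i).2 U hU).2, sum_const, (hu i).1, smul_eq_mul]

theorem le_finrank_tupleSpan (hu : u ∈ partTuples P d k) {i : ι} {U : Submodule F V}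
    (hU : U ∈ u i) : d i ≤ finrank F (tupleSpan u) :=
  ((mem_partTuples.1 hu i).2 U hU).2 ▸ Submodule.finrank_mono (le_tupleSpan hU)

theorem add_le_finrank_tupleSpan (hP : IsVSPartition F P) (hu : u ∈ partTuples P d k) {i j : ι}
    {U U' : Submodule F V} (hU : U ∈ u i) (hU' : U' ∈ u j) (hne : U ≠ U') :
    d i + d j ≤ finrank F (tupleSpan u) := by
  obtain ⟨hUP, hUd⟩ := (mem_partTuples.1 hu i).2 U hU
  obtain ⟨hU'P, hU'd⟩ := (mem_partTuples.1 hu j).2 U' hU'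
  calc d i + d j = finrank F ↥(U ⊔ U') := by
        rw [← hUd, ← hU'd, ← Submodule.finrank_sup_add_finrank_inf_eq,
          (hP.disjoint hUP hU'P hne).eq_bot, finrank_bot, add_zero]
    _ ≤ finrank F (tupleSpan u) :=
        Submodule.finrank_mono (sup_le (le_tupleSpan hU) (le_tupleSpan hU'))

theorem natCard_hyperplaneTuples_eq_sum [Finite F] [Nonempty ι] (hP : IsVSPartition F P)
    (hk : ∀ i, 0 < k i) :
    Nat.card {x : Submodule F V × (ι → Finset (Submodule F V)) //
        finrank F x.1 = finrank F V - 1 ∧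
        ∀ i, (x.2 i).card = k i ∧ ∀ U ∈ x.2 i, U ∈ P ∧ finrank F U = d i ∧ U ≤ x.1} =
      ∑ u ∈ partTuples P d k, hFun (Nat.card F) (finrank F (tupleSpan u)) (finrank F V) := by
  have : Finite V := Module.finite_of_finite F
  let e : {x : Submodule F V × (ι → Finset (Submodule F V)) //
        finrank F x.1 = finrank F V - 1 ∧
        ∀ i, (x.2 i).card = k i ∧ ∀ U ∈ x.2 i, U ∈ P ∧ finrank F U = d i ∧ U ≤ x.1} ≃
      Σ u : partTuples P d k,
        {H : Submodule F V // finrank F H = finrank F V - 1 ∧ tupleSpan u.1 ≤ H} :=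
    { toFun := fun x => ⟨⟨x.1.2, mem_partTuples.2 fun i =>
          ⟨(x.2.2 i).1, fun U hU => ((x.2.2 i).2 U hU).imp_right And.left⟩⟩,
        ⟨x.1.1, x.2.1, tupleSpan_le_iff.2 fun i U hU => ((x.2.2 i).2 U hU).2.2⟩⟩
      invFun := fun y => ⟨(y.2.1, y.1.1), y.2.2.1, fun i => ⟨(mem_partTuples.1 y.1.2 i).1,
          fun U hU => ((mem_partTuples.1 y.1.2 i).2 U hU).imp_right
            fun hd => ⟨hd, tupleSpan_le_iff.1 y.2.2.2 i U hU⟩⟩⟩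
      left_inv := fun _ => rfl
      right_inv := fun _ => rfl }
  refine (Nat.card_congr e).trans (Nat.card_sigma.trans ?_)
  rw [← sum_attach (partTuples P d k), ← univ_eq_attach]
  refine sum_congr rfl fun u _ => natCard_hyperplanes_containing _ ?_
  obtain ⟨i⟩ := ‹Nonempty ι›
  exact (Submodule.one_le_finrank_iff.2 (tupleSpan_ne_bot hP u.2 (hk i))).trans
    (Submodule.finrank_le _)

end PartitionTuples

theorem dMin_le_finrank_tupleSpan {F V : Type*} [Field F] [AddCommGroup V] [Module F V]
    [FiniteDimensional F V] {l : ℕ} (hl : 1 ≤ l) {P : Finset (Submodule F V)}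
    (hP : IsVSPartition F P) {d k : Fin l → ℕ} (hmono : StrictMono d) (hk : ∀ i, 0 < k i)
    {u : Fin l → Finset (Submodule F V)} (hu : u ∈ partTuples P d k) :
    (if 2 ≤ k ⟨l - 1, by omega⟩ then 2 * d ⟨l - 1, by omega⟩
      else if 2 ≤ l then d ⟨l - 1, by omega⟩ + d ⟨l - 2, by omega⟩
      else d ⟨0, by omega⟩) ≤ finrank F (tupleSpan u) := by
  split_ifs with hk2 hl2
  · obtain ⟨U, hU, U', hU', hne⟩ :=
      one_lt_card.1 (((mem_partTuples.1 hu _).1).symm ▸ hk2 : 1 < (u ⟨l - 1, _⟩).card)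
    rw [two_mul]
    exact add_le_finrank_tupleSpan hP hu hU hU' hne
  · obtain ⟨U, hU⟩ := nonempty_of_mem_partTuples hu (hk ⟨l - 1, by omega⟩)
    obtain ⟨U', hU'⟩ := nonempty_of_mem_partTuples hu (hk ⟨l - 2, by omega⟩)
    refine add_le_finrank_tupleSpan hP hu hU hU' fun h => ?_
    have hlt := hmono
      (Fin.mk_lt_mk.2 (by omega) : (⟨l - 2, by omega⟩ : Fin l) < ⟨l - 1, by omega⟩)
    rw [← ((mem_partTuples.1 hu _).2 U hU).2, ← ((mem_partTuples.1 hu _).2 U' hU').2, h] at hlt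
    exact lt_irrefl _ hlt
  · obtain ⟨U, hU⟩ := nonempty_of_mem_partTuples hu (hk ⟨0, by omega⟩)
    exact le_finrank_tupleSpan hu hU

/-- The double-counting lemma for tuples of hyperplanes with prescribed sets of
members of the partition contained in them. -/
theorem stmt2 (q n l : ℕ) (hl : 1 ≤ l) (F V : Type*) [Field F] [Fintype F] [AddCommGroup V]
    [Module F V] [FiniteDimensional F V] (hq : Fintype.card F = q)
    (hnV : Module.finrank F V = n)
    (P : Finset (Submodule F V)) (hP : IsVSPartition F P)
    (d k : Fin l → ℕ) (hmono : StrictMono d)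
    (hk1 : ∀ i, 1 ≤ k i) :
    (∏ i, (dimCount F P (d i)).choose (k i)) * hFun q (∑ i, k i * d i) n ≤
      Nat.card {x : Submodule F V × (Fin l → Finset (Submodule F V)) //
        Module.finrank F ↥x.1 = n - 1 ∧
        ∀ i, (x.2 i).card = k i ∧
          ∀ U ∈ x.2 i, U ∈ P ∧ Module.finrank F ↥U = d i ∧ U ≤ x.1} ∧
    Nat.card {x : Submodule F V × (Fin l → Finset (Submodule F V)) //
        Module.finrank F ↥x.1 = n - 1 ∧
        ∀ i, (x.2 i).card = k i ∧
          ∀ U ∈ x.2 i, U ∈ P ∧ Module.finrank F ↥U = d i ∧ U ≤ x.1} ≤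
      (∏ i, (dimCount F P (d i)).choose (k i)) *
        hFun q (if 2 ≤ k ⟨l - 1, by omega⟩ then 2 * d ⟨l - 1, by omega⟩
          else if 2 ≤ l then d ⟨l - 1, by omega⟩ + d ⟨l - 2, by omega⟩
          else d ⟨0, by omega⟩) n := by
  subst hnV
  rw [← Nat.card_eq_fintype_card] at hq
  subst hq
  have : Nonempty (Fin l) := ⟨⟨0, hl⟩⟩
  rw [natCard_hyperplaneTuples_eq_sum hP hk1, ← card_partTuples]
  exact ⟨card_nsmul_le_sum _ _ _ fun u hu =>
      hFun_le_hFun_of_le Nat.card_pos _ (finrank_tupleSpan_le hu),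
    sum_le_card_nsmul _ _ _ fun u hu =>
      hFun_le_hFun_of_le Nat.card_pos _ (dMin_le_finrank_tupleSpan hl hP hmono hk1 hu)⟩
end

section
/- Let P be a vector space partition of an n-dimensional vector space V over the finite field F with q elements, and let d, d' be integers with 1 ≤ d < d' ≤ n−2, m_d > 0 and m_{d'} > 0. Then the number of triples (H, U, U'), where H is a hyperplane of V, U is a member of P of dimension d with U ⊆ H, and U' is a member of P of dimension d' with U' ⊆ H, equals m_d · m_{d'} · h(d + d'; n, q). -/
attribute [local instance] Classical.propDecidable

/-!
Distinct members of a vector space partition meet in `0`, so a member `U` of dimension `d` and a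
member `U'` of dimension `d' ≠ d` span a subspace of dimension `d + d'`. Hyperplanes containing a
subspace `W` correspond, via the dual annihilator, to lines in the `(n - dim W)`-dimensional space
`W⁰`, of which there are `h(dim W; n, q)`. Summing over the `m_d m_{d'}` pairs `(U, U')` gives the
count.
-/

open Module

theorem card_triples_sup_le_eq_sum {α : Type*} [SemilatticeSup α] [Finite α]
    (A : α → Prop) (s t : Finset α) :
    Nat.card {x : α × α × α // A x.1 ∧ x.2.1 ∈ s ∧ x.2.1 ≤ x.1 ∧ x.2.2 ∈ t ∧ x.2.2 ≤ x.1} =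
      ∑ p ∈ s ×ˢ t, Nat.card {a : α // A a ∧ p.1 ⊔ p.2 ≤ a} := by
  let e : {x : α × α × α // A x.1 ∧ x.2.1 ∈ s ∧ x.2.1 ≤ x.1 ∧ x.2.2 ∈ t ∧ x.2.2 ≤ x.1} ≃
      Σ p : ↥(s ×ˢ t), {a : α // A a ∧ p.1.1 ⊔ p.1.2 ≤ a} :=
    { toFun := fun x => ⟨⟨(x.1.2.1, x.1.2.2), Finset.mem_product.2 ⟨x.2.2.1, x.2.2.2.2.1⟩⟩,
        ⟨x.1.1, x.2.1, sup_le x.2.2.2.1 x.2.2.2.2.2⟩⟩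
      invFun := fun y => ⟨(y.2.1, y.1.1.1, y.1.1.2), y.2.2.1, (Finset.mem_product.1 y.1.2).1,
        le_sup_left.trans y.2.2.2, (Finset.mem_product.1 y.1.2).2, le_sup_right.trans y.2.2.2⟩
      left_inv := fun _ => rfl
      right_inv := fun _ => rfl }
  rw [Nat.card_congr e, Nat.card_sigma, Finset.sum_coe_sort (s ×ˢ t)
    (fun p => Nat.card {a : α // A a ∧ p.1 ⊔ p.2 ≤ a})]

namespace Subspace

variable {K V : Type*} [Field K] [AddCommGroup V] [Module K V] [FiniteDimensional K V]

theorem finrank_dualAnnihilator_eq_one_iff (H : Subspace K V) :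
    finrank K H.dualAnnihilator = 1 ↔ finrank K H + 1 = finrank K V := by
  have := H.finrank_add_finrank_dualAnnihilator_eq
  omega

theorem card_hyperplanes_ge_eq_card_projectivization (W : Subspace K V) :
    Nat.card {H : Subspace K V // finrank K H + 1 = finrank K V ∧ W ≤ H} =
      Nat.card (Projectivization K W.dualAnnihilator) := by
  let A := W.dualAnnihilator
  calc _ = Nat.card {Φ : Subspace K (Dual K V) // Φ ≤ A ∧ finrank K Φ = 1} :=
        Nat.card_congr <|
          (orderIsoFiniteDimensional (K := K) (V := V)).toEquiv.subtypeEquiv fun H =>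
            and_comm.trans <| and_congr dualAnnihilator_le_dualAnnihilator_iff.symm
              (finrank_dualAnnihilator_eq_one_iff H).symm
    _ = Nat.card {Φ : {Φ : Subspace K (Dual K V) // Φ ≤ A} // finrank K Φ.1 = 1} :=
        Nat.card_congr (Equiv.subtypeSubtypeEquivSubtypeInter _ _).symm
    _ = Nat.card {L : Submodule K A // finrank K L = 1} :=
        Nat.card_congr <| ((Submodule.MapSubtype.orderIso A).toEquiv.subtypeEquiv fun L => by
          rw [← Submodule.finrank_map_subtype_eq A L]; rfl).symm
    _ = Nat.card (Projectivization K A) := Nat.card_congr (Projectivization.equivSubmodule K A).symm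

theorem card_hyperplanes_ge [Fintype K] (W : Subspace K V) :
    Nat.card {H : Subspace K V // finrank K H + 1 = finrank K V ∧ W ≤ H} =
      hFun (Fintype.card K) (finrank K W) (finrank K V) := by
  have := Module.finite_of_finite K (M := V)
  rw [card_hyperplanes_ge_eq_card_projectivization, Projectivization.card'',
    Module.natCard_eq_pow_finrank (K := K), Nat.card_eq_fintype_card, hFun, if_pos W.finrank_le,
    ← W.finrank_add_finrank_dualAnnihilator_eq, Nat.add_sub_cancel_left]

end Subspace

namespace IsVSPartition

variable {F V : Type*} [Field F] [AddCommGroup V] [Module F V] {P : Finset (Submodule F V)}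
  {U U' : Submodule F V}

theorem inf_eq_bot (hP : IsVSPartition F P) (hU : U ∈ P) (hU' : U' ∈ P) (hne : U ≠ U') :
    U ⊓ U' = ⊥ := by
  refine (Submodule.eq_bot_iff _).2 fun v hv => by_contra fun hv0 => hne ?_
  obtain ⟨_, -, huniq⟩ := hP.2 v hv0
  exact (huniq U ⟨hU, hv.1⟩).trans (huniq U' ⟨hU', hv.2⟩).symm

theorem finrank_sup [FiniteDimensional F V] (hP : IsVSPartition F P) (hU : U ∈ P)
    (hU' : U' ∈ P) (hne : U ≠ U') :
    finrank F ↥(U ⊔ U') = finrank F U + finrank F U' := by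
  have := Submodule.finrank_sup_add_finrank_inf_eq U U'
  rwa [hP.inf_eq_bot hU hU' hne, finrank_bot, add_zero] at this

theorem card_hyperplanes_ge_sup [Fintype F] [FiniteDimensional F V] (hP : IsVSPartition F P)
    (hU : U ∈ P) (hU' : U' ∈ P) (hne : U ≠ U') :
    Nat.card {H : Submodule F V // finrank F H = finrank F V - 1 ∧ U ⊔ U' ≤ H} =
      hFun (Fintype.card F) (finrank F U + finrank F U') (finrank F V) := by
  have hU_pos : 1 ≤ finrank F U := Submodule.one_le_finrank_iff.2 (hP.1 U hU)
  have hUV := U.finrank_le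
  rw [← hP.finrank_sup hU hU' hne, ← Subspace.card_hyperplanes_ge]
  exact Nat.card_congr <| Equiv.subtypeEquivRight fun H => and_congr_left' (by omega)

end IsVSPartition

theorem stmt5_general (q n d d' : ℕ) (F V : Type*) [Field F] [Fintype F] [AddCommGroup V]
    [Module F V] [FiniteDimensional F V] (hq : Fintype.card F = q)
    (hnV : Module.finrank F V = n)
    (P : Finset (Submodule F V)) (hP : IsVSPartition F P)
    (hdd' : d < d') :
    Nat.card {x : Submodule F V × Submodule F V × Submodule F V //
        Module.finrank F ↥x.1 = n - 1 ∧
        x.2.1 ∈ P ∧ Module.finrank F ↥x.2.1 = d ∧ x.2.1 ≤ x.1 ∧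
        x.2.2 ∈ P ∧ Module.finrank F ↥x.2.2 = d' ∧ x.2.2 ≤ x.1}
      = dimCount F P d * dimCount F P d' * hFun q (d + d') n := by
  have := Module.finite_of_finite F (M := V)
  set Pd := P.filter fun U : Submodule F V => finrank F U = d
  set Pd' := P.filter fun U : Submodule F V => finrank F U = d'
  calc _ = Nat.card {x : Submodule F V × Submodule F V × Submodule F V //
          finrank F x.1 = n - 1 ∧ x.2.1 ∈ Pd ∧ x.2.1 ≤ x.1 ∧ x.2.2 ∈ Pd' ∧ x.2.2 ≤ x.1} :=
        Nat.card_congr <| Equiv.subtypeEquivRight fun x => by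
          simp only [Pd, Pd', Finset.mem_filter, and_assoc]
    _ = ∑ p ∈ Pd ×ˢ Pd', Nat.card {H : Submodule F V // finrank F H = n - 1 ∧ p.1 ⊔ p.2 ≤ H} :=
        card_triples_sup_le_eq_sum (fun H : Submodule F V => finrank F H = n - 1) Pd Pd'
    _ = ∑ _p ∈ Pd ×ˢ Pd', hFun q (d + d') n := by
        refine Finset.sum_congr rfl fun p hp => ?_
        obtain ⟨⟨hU, hUd⟩, hU', hUd'⟩ := by simpa only [Pd, Pd', Finset.mem_product,
          Finset.mem_filter] using hp
        have hne : p.1 ≠ p.2 := by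
          rintro h
          rw [h] at hUd
          omega
        rw [← hq, ← hnV, ← hUd, ← hUd', hP.card_hyperplanes_ge_sup hU hU' hne]
    _ = _ := by rw [Finset.sum_const, Finset.card_product, smul_eq_mul]; rfl

/-- Counting triples (hyperplane, member of dimension `d`, member of dimension `d'`)
with both members contained in the hyperplane. -/
theorem stmt5 (q n d d' : ℕ) (F V : Type*) [Field F] [Fintype F] [AddCommGroup V]
    [Module F V] [FiniteDimensional F V] (hq : Fintype.card F = q)
    (hnV : Module.finrank F V = n)
    (P : Finset (Submodule F V)) (hP : IsVSPartition F P)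
    (hd1 : 1 ≤ d) (hdd' : d < d') (hd2 : d' ≤ n - 2)
    (hmd : 0 < dimCount F P d) (hmd' : 0 < dimCount F P d') :
    Nat.card {x : Submodule F V × Submodule F V × Submodule F V //
        Module.finrank F ↥x.1 = n - 1 ∧
        x.2.1 ∈ P ∧ Module.finrank F ↥x.2.1 = d ∧ x.2.1 ≤ x.1 ∧
        x.2.2 ∈ P ∧ Module.finrank F ↥x.2.2 = d' ∧ x.2.2 ≤ x.1}
      = dimCount F P d * dimCount F P d' * hFun q (d + d') n :=
  stmt5_general q n d d' F V hq hnV P hP hdd'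
end

section
/- Let P be a vector space partition of an n-dimensional vector space V over the finite field F with q elements. Let d be the highest dimension occurring among the members of P, and let d' be another dimension occurring among the members of P (so d' ≠ d, m_d > 0 and m_{d'} > 0) with d' < n − d. Then |P| ≥ q^d + q^{d'} + 1. -/
/-!
Choose a hyperplane `H` containing a member of dimension `d` and one of dimension `d'`; it exists
because `d + d' < n`. Counting the nonzero vectors of `V` and of `H` along the partition gives two
identities; a member not contained in `H` meets it in a hyperplane of itself, so it has exactly
`q` times as many vectors as its trace on `H`. Eliminating these traces leaves
`|P| = 1 + ∑_{X ∈ P, X ≤ H} |X|`, and the two chosen members already contribute `q^d + q^{d'}`.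
-/

attribute [local instance] Classical.propDecidable

open Finset

namespace Submodule

variable {F V : Type*} [Field F] [AddCommGroup V] [Module F V]

theorem finrank_add_one_of_isCoatom [FiniteDimensional F V] {H : Submodule F V}
    (hH : IsCoatom H) : Module.finrank F H + 1 = Module.finrank F V := by
  obtain ⟨x, -, hxH⟩ := SetLike.exists_of_lt hH.lt_top
  have hx : x ≠ 0 := fun h => hxH (h ▸ H.zero_mem)
  rw [← finrank_add_eq_of_isCompl (isCompl_span_singleton_of_isCoatom_of_notMem hH hxH),
    finrank_span_singleton hx]

theorem finrank_inf_add_one_of_isCoatom [FiniteDimensional F V] {H X : Submodule F V}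
    (hH : IsCoatom H) (hX : ¬X ≤ H) :
    Module.finrank F ↥(X ⊓ H) + 1 = Module.finrank F X := by
  have hsup : X ⊔ H = ⊤ := hH.2 _ (right_lt_sup.mpr hX)
  have := finrank_sup_add_finrank_inf_eq X H
  rw [hsup, finrank_top, ← finrank_add_one_of_isCoatom hH] at this
  omega

theorem card_eq_card_mul_card_inf_of_isCoatom [Fintype F] [Fintype V] {H X : Submodule F V}
    (hH : IsCoatom H) (hX : ¬X ≤ H) :
    Fintype.card X = Fintype.card F * Fintype.card ↥(X ⊓ H) := by
  rw [Module.card_eq_pow_finrank (K := F) (V := X),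
    Module.card_eq_pow_finrank (K := F) (V := ↥(X ⊓ H)), ← pow_succ',
    finrank_inf_add_one_of_isCoatom hH hX]

theorem card_filter_mem_ne_zero_add_one [Fintype V] (S : Submodule F V) :
    #{v | v ∈ S ∧ v ≠ 0} + 1 = Fintype.card S := by
  rw [Fintype.card_subtype, ← card_erase_add_one (s := {v | v ∈ S}) (a := 0) (by simp)]
  congr 2
  ext v
  simp [and_comm]

end Submodule

namespace IsVSPartition

variable {F V : Type*} [Field F] [AddCommGroup V] [Module F V] {P : Finset (Submodule F V)}

/-- Double counting of the nonzero vectors of `H` along the traces of the members of `P`. -/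
theorem sum_card_inf_add_one [Fintype V] (hP : IsVSPartition F P) (H : Submodule F V) :
    ∑ X ∈ P, Fintype.card ↥(X ⊓ H) + 1 = Fintype.card H + #P := by
  have hunion : ({v | v ∈ H ∧ v ≠ 0} : Finset V) =
      P.biUnion fun X => {v | v ∈ X ⊓ H ∧ v ≠ 0} := by
    ext v
    simp only [mem_filter, mem_univ, true_and, mem_biUnion, Submodule.mem_inf]
    constructor
    · rintro ⟨hvH, hv⟩
      obtain ⟨X, ⟨hXP, hvX⟩, -⟩ := hP.2 v hv
      exact ⟨X, hXP, ⟨hvX, hvH⟩, hv⟩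
    · rintro ⟨X, -, ⟨-, hvH⟩, hv⟩
      exact ⟨hvH, hv⟩
  have hdisj : (P : Set (Submodule F V)).PairwiseDisjoint
      fun X => ({v | v ∈ X ⊓ H ∧ v ≠ 0} : Finset V) := by
    intro X hX Y hY hXY
    refine disjoint_left.mpr fun v hvX hvY => hXY ?_
    simp only [mem_filter, mem_univ, true_and, Submodule.mem_inf] at hvX hvY
    exact (hP.2 v hvX.2).unique ⟨hX, hvX.1.1⟩ ⟨hY, hvY.1.1⟩
  calc ∑ X ∈ P, Fintype.card ↥(X ⊓ H) + 1
      = ∑ X ∈ P, (#{v | v ∈ X ⊓ H ∧ v ≠ 0} + 1) + 1 := by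
        simp only [Submodule.card_filter_mem_ne_zero_add_one]
    _ = #{v | v ∈ H ∧ v ≠ 0} + 1 + #P := by
        rw [sum_add_distrib, hunion, card_biUnion hdisj, sum_const, smul_eq_mul, mul_one]
        ring
    _ = Fintype.card H + #P := by rw [Submodule.card_filter_mem_ne_zero_add_one]

theorem card_eq_sum_card_le_add_one [Fintype F] [Fintype V] (hP : IsVSPartition F P)
    {H : Submodule F V} (hH : IsCoatom H) :
    #P = ∑ X ∈ P with X ≤ H, Fintype.card X + 1 := by
  set q := Fintype.card F
  set a := ∑ X ∈ P with X ≤ H, Fintype.card X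
  set b := ∑ X ∈ P with ¬X ≤ H, Fintype.card ↥(X ⊓ H)
  have hV : Fintype.card (⊤ : Submodule F V) = q * Fintype.card H := by
    rw [Submodule.card_eq_card_mul_card_inf_of_isCoatom hH (hH.lt_top.not_ge), top_inf_eq]
  have hcount_top : a + q * b + 1 = q * Fintype.card H + #P := by
    have hout : q * b = ∑ X ∈ P with ¬X ≤ H, Fintype.card X := by
      rw [mul_sum]
      exact sum_congr rfl fun X hX =>
        (Submodule.card_eq_card_mul_card_inf_of_isCoatom hH (mem_filter.mp hX).2).symm
    have h := hP.sum_card_inf_add_one ⊤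
    simp only [inf_top_eq] at h
    rw [← sum_filter_add_sum_filter_not P (· ≤ H)] at h
    rw [hout, ← hV]
    exact h
  have hcount_H : a + b + 1 = Fintype.card H + #P := by
    rw [← hP.sum_card_inf_add_one H, ← sum_filter_add_sum_filter_not P (· ≤ H),
      sum_congr rfl fun X hX => by rw [inf_eq_left.mpr (mem_filter.mp hX).2]]
  have hq : (q : ℤ) - 1 ≠ 0 := by
    have : 1 < q := Fintype.one_lt_card
    omega
  zify at hcount_top hcount_H
  have : ((q : ℤ) - 1) * #P = ((q : ℤ) - 1) * (a + 1) := by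
    linear_combination hcount_top - (q : ℤ) * hcount_H
  exact_mod_cast mul_left_cancel₀ hq this

end IsVSPartition

theorem stmt7_general (q n d d' : ℕ) (F V : Type*) [Field F] [Fintype F] [AddCommGroup V]
    [Module F V] [FiniteDimensional F V] (hq : Fintype.card F = q)
    (hnV : Module.finrank F V = n)
    (P : Finset (Submodule F V)) (hP : IsVSPartition F P)
    (hd : 0 < dimCount F P d) (hd' : 0 < dimCount F P d')
    (hne : d' ≠ d) (hlt : d' < n - d) :
    q ^ d + q ^ d' + 1 ≤ P.card := by
  have : Finite V := Module.finite_of_finite F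
  have : Fintype V := Fintype.ofFinite V
  obtain ⟨U, hU⟩ := card_pos.mp hd
  obtain ⟨hUP, hU⟩ := mem_filter.mp hU
  obtain ⟨W, hW⟩ := card_pos.mp hd'
  obtain ⟨hWP, hW⟩ := mem_filter.mp hW
  have hUW : U ≠ W := fun h => hne (by rw [← hW, ← hU, h])
  have hsup_ne_top : U ⊔ W ≠ ⊤ := by
    intro h
    have := Submodule.finrank_add_le_finrank_add_finrank U W
    rw [h, finrank_top, hnV, hU, hW] at this
    omega
  obtain ⟨H, hH, hUWH⟩ := (eq_top_or_exists_le_coatom (U ⊔ W)).resolve_left hsup_ne_top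
  have hcard : ∀ X : Submodule F V, Fintype.card X = q ^ Module.finrank F X := fun X => by
    rw [Module.card_eq_pow_finrank (K := F), hq]
  have hpair : {U, W} ⊆ P.filter (· ≤ H) := by
    simp only [insert_subset_iff, singleton_subset_iff, mem_filter]
    exact ⟨⟨hUP, le_sup_left.trans hUWH⟩, ⟨hWP, le_sup_right.trans hUWH⟩⟩
  calc q ^ d + q ^ d' + 1 = ∑ X ∈ {U, W}, Fintype.card X + 1 := by
        rw [sum_pair hUW, hcard, hcard, hU, hW]
    _ ≤ ∑ X ∈ P with X ≤ H, Fintype.card X + 1 := by gcongr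
    _ = P.card := (hP.card_eq_sum_card_le_add_one hH).symm

/-- Lower bound on the number of spaces in a vector space partition containing a space
of highest dimension `d` and a space of another dimension `d' < n - d`. -/
theorem stmt7 (q n d d' : ℕ) (F V : Type*) [Field F] [Fintype F] [AddCommGroup V]
    [Module F V] [FiniteDimensional F V] (hq : Fintype.card F = q)
    (hnV : Module.finrank F V = n)
    (P : Finset (Submodule F V)) (hP : IsVSPartition F P)
    (hmax : ∀ U ∈ P, Module.finrank F ↥U ≤ d)
    (hd : 0 < dimCount F P d) (hd' : 0 < dimCount F P d')
    (hne : d' ≠ d) (hlt : d' < n - d) :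
    q ^ d + q ^ d' + 1 ≤ P.card :=
  stmt7_general q n d d' F V hq hnV P hP hd hd' hne hlt
end

section
/- Let P be a vector space partition of an n-dimensional vector space V over the finite field F with q elements such that P has at least two members, every member of P has dimension d, and n − d ≤ d. Then n = 2d and |P| = q^d + 1. -/
/-! Two distinct members of `P` meet trivially, so `2d ≤ n`, which with `n - d ≤ d` forces
`n = 2d`. Counting nonzero vectors member by member gives `|P| (q^d - 1) = q^{2d} - 1`,
and cancelling `q^d - 1` leaves `|P| = q^d + 1`. -/

attribute [local instance] Classical.propDecidable

namespace IsVSPartition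

open Finset

variable {F V : Type*} [Field F] [AddCommGroup V] [Module F V] {P : Finset (Submodule F V)}

theorem disjoint_s8 (hP : IsVSPartition F P) {U W : Submodule F V} (hU : U ∈ P) (hW : W ∈ P)
    (hUW : U ≠ W) : Disjoint U W := by
  rw [Submodule.disjoint_def]
  intro v hvU hvW
  by_contra hv
  obtain ⟨X, -, hX⟩ := hP.2 v hv
  exact hUW ((hX U ⟨hU, hvU⟩).trans (hX W ⟨hW, hvW⟩).symm)

theorem one_le_finrank [FiniteDimensional F V] (hP : IsVSPartition F P) {U : Submodule F V}
    (hU : U ∈ P) : 1 ≤ Module.finrank F U :=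
  Submodule.one_le_finrank_iff.mpr (hP.1 U hU)

theorem sum_card_sub_one [Finite V] (hP : IsVSPartition F P) :
    ∑ U ∈ P, (Nat.card U - 1) = Nat.card V - 1 := by
  have := Fintype.ofFinite V
  let nonzero (U : Submodule F V) : Finset V := (univ.filter (· ∈ U)).erase 0
  have hcard_nonzero (U : Submodule F V) : #(nonzero U) = Nat.card U - 1 := by
    rw [card_erase_of_mem (by simp), ← Fintype.card_subtype, Fintype.card_eq_nat_card]
  have hcover : univ.erase (0 : V) = P.biUnion nonzero := by
    ext v
    simp only [mem_erase, mem_univ, and_true, mem_biUnion, mem_filter, true_and, nonzero]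
    constructor
    · intro hv
      obtain ⟨X, hX, -⟩ := hP.2 v hv
      exact ⟨X, hX.1, hv, hX.2⟩
    · rintro ⟨-, -, hv, -⟩
      exact hv
  have hdisj : (P : Set (Submodule F V)).PairwiseDisjoint nonzero := by
    intro U hU W hW hUW
    simp only [Function.onFun, nonzero, disjoint_left, mem_erase, mem_filter, mem_univ, true_and]
    rintro v ⟨hv, hvU⟩ ⟨-, hvW⟩
    exact hv ((Submodule.disjoint_def.mp (hP.disjoint_s8 hU hW hUW)) v hvU hvW)
  rw [Nat.card_eq_fintype_card, ← card_univ, ← card_erase_of_mem (mem_univ 0), hcover,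
    card_biUnion hdisj]
  exact sum_congr rfl fun U _ => (hcard_nonzero U).symm

end IsVSPartition

/-- A nontrivial vector space partition into spaces all of dimension `d ≥ n - d`
must satisfy `n = 2d` and have exactly `q^d + 1` members. -/
theorem stmt8 (q n d : ℕ) (F V : Type*) [Field F] [Fintype F] [AddCommGroup V]
    [Module F V] [FiniteDimensional F V] (hq : Fintype.card F = q)
    (hnV : Module.finrank F V = n)
    (P : Finset (Submodule F V)) (hP : IsVSPartition F P)
    (hall : ∀ U ∈ P, Module.finrank F ↥U = d)
    (hnd : n - d ≤ d) (hcard : 2 ≤ P.card) :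
    n = 2 * d ∧ P.card = q ^ d + 1 := by
  obtain ⟨U, hU, W, hW, hUW⟩ := Finset.one_lt_card.mp hcard
  have hn : n = 2 * d := by
    have := Submodule.finrank_add_finrank_le_of_disjoint (hP.disjoint_s8 hU hW hUW)
    rw [hall U hU, hall W hW, hnV] at this
    omega
  refine ⟨hn, ?_⟩
  have : Finite V := Module.finite_of_finite F
  have hcardF : Nat.card F = q := by rw [Nat.card_eq_fintype_card, hq]
  have hcount : P.card * (q ^ d - 1) = (q ^ d + 1) * (q ^ d - 1) := by
    have := hP.sum_card_sub_one
    rw [Finset.sum_congr rfl fun X hX => by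
        rw [Module.natCard_eq_pow_finrank (K := F), hcardF, hall X hX],
      Finset.sum_const, smul_eq_mul, Module.natCard_eq_pow_finrank (K := F), hcardF, hnV, hn,
      pow_mul', ← one_pow 2, Nat.sq_sub_sq] at this
    exact this
  have hd : 1 ≤ d := hall U hU ▸ hP.one_le_finrank hU
  have hq_pow : 1 < q ^ d := Nat.one_lt_pow (by omega) (hq ▸ Fintype.one_lt_card)
  exact Nat.eq_of_mul_eq_mul_right (by omega) hcount
end

section
/- Let P be a vector space partition of a 2t-dimensional vector space V over the finite field F with q elements, let a be the integer with m_t = q^t + 1 − a, and let d be an integer with 1 ≤ d < t and m_d > 0. If m_d < (q^t − 1)/(q^{t−d} − 1), then a ≥ m_d − R_q(t, d, m_d), as an inequality of rational numbers. -/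
/-!
Let `N` be the set of hyperplanes of `V` containing no `t`-dimensional member of `P`. Any two
`t`-dimensional members span `V`, so a hyperplane contains at most one of them; hence the number
of hyperplanes in `N` through a subspace `U` that meets every `t`-dimensional member trivially is
determined by `m_t`. Apply this to `U = 0` and to each `d`-dimensional member `D`, and bound the
number of hyperplanes through two distinct `d`-dimensional members by the number through their
`2d`-dimensional sum. The Bonferroni inequality `∑_D |N_D| - ∑_{D < D'} |N_D ∩ N_D'| ≤ |N|`, for
the sets `N_D` of hyperplanes in `N` through `D`, becomes the claim after substituting
`m_t = q^t + 1 - a`.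
-/

attribute [local instance] Classical.propDecidable

/-- The rational number `R_q(t, d, m)`. -/
def Rq (q t d m : ℕ) : ℚ :=
  (m : ℚ) * ((m : ℚ) - 1) *
      (((q : ℚ) ^ (2 * t - 2 * d) - 1) / 2 + 1 - (q : ℚ) ^ (t - d)) /
    ((q : ℚ) ^ t - 1 - (m : ℚ) * ((q : ℚ) ^ (t - d) - 1))

open Module Finset

section DoubleCounting
variable {α β : Type*}

theorem card_eq_card_filter_forall_not_le_add_sum [SemilatticeSup α] [OrderTop α]
    {B T : Finset α} (hB : ∀ b ∈ B, b ≠ ⊤) (hT : (T : Set α).Pairwise fun w w' => w ⊔ w' = ⊤) :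
    #B = #{b ∈ B | ∀ w ∈ T, ¬ w ≤ b} + ∑ w ∈ T, #{b ∈ B | w ≤ b} := by
  rw [← card_filter_add_card_filter_not (fun b => ∀ w ∈ T, ¬ w ≤ b)]
  congr 1
  have : {b ∈ B | ¬ ∀ w ∈ T, ¬ w ≤ b} = T.biUnion fun w => {b ∈ B | w ≤ b} := by
    ext b
    simp only [mem_filter, mem_biUnion, not_forall, not_not, exists_prop]
    tauto
  rw [this, card_biUnion]
  intro w hw w' hw' hne
  refine disjoint_left.2 fun b hb hb' => hB b (mem_filter.1 hb).1 (top_unique ?_)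
  rw [← hT hw hw' hne]
  exact sup_le (mem_filter.1 hb).2 (mem_filter.1 hb').2

theorem two_mul_sum_card_filter_le (r : α → β → Prop) (S : Finset α) (N : Finset β) :
    2 * ∑ a ∈ S, #{b ∈ N | r a b} ≤
      2 * #N + ∑ p ∈ S.offDiag, #{b ∈ N | r p.1 b ∧ r p.2 b} := by
  have h1 := sum_card_bipartiteAbove_eq_sum_card_bipartiteBelow r (s := S) (t := N)
  have h2 := sum_card_bipartiteAbove_eq_sum_card_bipartiteBelow
    (fun p b => r p.1 b ∧ r p.2 b) (s := S.offDiag) (t := N)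
  have hpairs : ∀ b, S.offDiag.bipartiteBelow (fun p b => r p.1 b ∧ r p.2 b) b =
      (S.bipartiteBelow r b).offDiag := fun b => by
    ext p
    simp only [mem_bipartiteBelow, mem_offDiag]
    tauto
  simp only [bipartiteAbove] at h1 h2
  rw [h1, h2, card_eq_sum_ones N, mul_sum, mul_sum, ← sum_add_distrib]
  refine sum_le_sum fun b _ => ?_
  rw [hpairs, offDiag_card]
  -- `2 g ≤ 2 + g (g - 1)` because `(g - 1) (g - 2) ≥ 0` for every natural number `g`
  rcases #(S.bipartiteBelow r b) with _ | _ | g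
  · simp
  · simp
  · have : (g + 1 + 1) * (g + 1 + 1) = g * g + 4 * g + 4 := by ring
    omega

end DoubleCounting

-- The Bonferroni bound, with `s = q^t`, `r = q^(t-d)`, `m = m_d` and `m_t = s + 1 - a`.
theorem sub_div_le_of_two_mul_le {K : Type*} [Field K] [LinearOrder K] [IsStrictOrderedRing K]
    {s r m a : K} (hden : 0 < s - 1 - m * (r - 1))
    (h : 2 * m * (s * r - 1 - (s + 1 - a) * (r - 1)) ≤
      2 * (s * s - 1 - (s + 1 - a) * (s - 1)) + m * (m - 1) * (r * r - 1)) :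
    m - m * (m - 1) * ((r * r - 1) / 2 + 1 - r) / (s - 1 - m * (r - 1)) ≤ a := by
  rw [sub_le_comm, le_div_iff₀ hden]
  linear_combination h / 2

section Hyperplanes

variable {F V : Type*} [Field F] [AddCommGroup V] [Module F V]

theorem IsVSPartition.inf_eq_bot_s12 {P : Finset (Submodule F V)} (hP : IsVSPartition F P)
    {U W : Submodule F V} (hU : U ∈ P) (hW : W ∈ P) (hne : U ≠ W) : U ⊓ W = ⊥ := by
  by_contra h
  obtain ⟨v, hv, hv0⟩ := Submodule.exists_mem_ne_zero_of_ne_bot h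
  exact hne ((hP.2 v hv0).unique ⟨hU, hv.1⟩ ⟨hW, hv.2⟩)

variable [FiniteDimensional F V]

theorem natCard_hyperplanes_ge_mul (U : Submodule F V) :
    Nat.card {H : Submodule F V // U ≤ H ∧ finrank F H + 1 = finrank F V} * (Nat.card F - 1) =
      Nat.card F ^ (finrank F V - finrank F U) - 1 := by
  -- via the dual annihilator, hyperplanes through `U` are the lines of `U⁰ ≅ (V ⧸ U)*`
  have hU := Subspace.finrank_add_finrank_dualAnnihilator_eq U
  set A := U.dualAnnihilator
  have toDual : {H : Submodule F V // U ≤ H ∧ finrank F H + 1 = finrank F V} ≃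
      {L : Submodule F (Dual F V) // L ≤ A ∧ finrank F L = 1} :=
    (Subspace.orderIsoFiniteDimensional.toEquiv.trans OrderDual.ofDual).subtypeEquiv fun H => by
      have := Subspace.finrank_add_finrank_dualAnnihilator_eq H
      change _ ↔ H.dualAnnihilator ≤ A ∧ finrank F H.dualAnnihilator = 1
      rw [Subspace.dualAnnihilator_le_dualAnnihilator_iff]
      exact and_congr_right fun _ => by omega
  have toSub : {L : Submodule F A // finrank F L = 1} ≃
      {L : Submodule F (Dual F V) // L ≤ A ∧ finrank F L = 1} :=
    ((Submodule.MapSubtype.orderIso A).toEquiv.subtypeEquiv fun L => by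
      change _ ↔ finrank F (L.map A.subtype) = 1
      rw [Submodule.finrank_map_subtype_eq]).trans
      (Equiv.subtypeSubtypeEquivSubtypeInter _ _)
  rw [Nat.card_congr (toDual.trans ((Projectivization.equivSubmodule F A).trans toSub).symm),
    ← Projectivization.card, Module.natCard_eq_pow_finrank (K := F)]
  congr 2
  omega

theorem Submodule.finrank_sup_of_inf_eq_bot {U W : Submodule F V} (h : U ⊓ W = ⊥) :
    finrank F ↥(U ⊔ W) = finrank F U + finrank F W := by
  have := Submodule.finrank_sup_add_finrank_inf_eq U W
  rwa [h, finrank_bot, add_zero] at this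

variable (F V) [Finite F]

noncomputable def hyperplanes : Finset (Submodule F V) :=
  haveI : Finite V := Module.finite_of_finite F
  (Set.toFinite {H : Submodule F V | finrank F H + 1 = finrank F V}).toFinset

variable {F V}

theorem mem_hyperplanes {H : Submodule F V} :
    H ∈ hyperplanes F V ↔ finrank F H + 1 = finrank F V :=
  Set.Finite.mem_toFinset _

theorem ne_top_of_mem_hyperplanes {H : Submodule F V} (hH : H ∈ hyperplanes F V) : H ≠ ⊤ := by
  rintro rfl
  rw [mem_hyperplanes, finrank_top] at hH
  omega

theorem card_hyperplanes_ge_mul (U : Submodule F V) :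
    (#{H ∈ hyperplanes F V | U ≤ H} : ℚ) * (Nat.card F - 1) =
      (Nat.card F : ℚ) ^ (finrank F V - finrank F U) - 1 := by
  have hcard : #{H ∈ hyperplanes F V | U ≤ H} =
      Nat.card {H : Submodule F V // U ≤ H ∧ finrank F H + 1 = finrank F V} := by
    rw [← Nat.card_eq_finsetCard]
    exact Nat.card_congr (Equiv.subtypeEquivRight fun H => by
      rw [mem_filter, mem_hyperplanes, and_comm])
  have hq : 1 ≤ Nat.card F := Finite.card_pos
  have := congrArg (Nat.cast : ℕ → ℚ) (natCard_hyperplanes_ge_mul U)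
  push_cast [Nat.cast_sub hq, Nat.cast_sub (Nat.one_le_pow _ _ hq)] at this
  rw [hcard]
  exact this

noncomputable def hyperplanesAvoiding (T : Finset (Submodule F V)) : Finset (Submodule F V) :=
  {H ∈ hyperplanes F V | ∀ W ∈ T, ¬ W ≤ H}

theorem card_hyperplanesAvoiding_ge_mul_le (T : Finset (Submodule F V)) (U : Submodule F V) :
    (#{H ∈ hyperplanesAvoiding T | U ≤ H} : ℚ) * (Nat.card F - 1) ≤
      (Nat.card F : ℚ) ^ (finrank F V - finrank F U) - 1 := by
  rw [← card_hyperplanes_ge_mul]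
  have hq : (1 : ℚ) ≤ Nat.card F := by exact_mod_cast Finite.card_pos
  gcongr
  intro H
  simp only [hyperplanesAvoiding, mem_filter]
  tauto

theorem card_hyperplanesAvoiding_ge_mul_of_pairwise {t : ℕ} (hV : finrank F V = 2 * t)
    {T : Finset (Submodule F V)} (hT : ∀ W ∈ T, finrank F W = t)
    (hTdisj : (T : Set (Submodule F V)).Pairwise fun W W' => W ⊓ W' = ⊥)
    {U : Submodule F V} (hU : ∀ W ∈ T, U ⊓ W = ⊥) :
    (#{H ∈ hyperplanesAvoiding T | U ≤ H} : ℚ) * (Nat.card F - 1) =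
      (Nat.card F : ℚ) ^ (2 * t - finrank F U) - 1 -
        #T * ((Nat.card F : ℚ) ^ (t - finrank F U) - 1) := by
  have hTsup : (T : Set (Submodule F V)).Pairwise fun W W' => W ⊔ W' = ⊤ :=
    fun W hW W' hW' hne => Submodule.eq_top_of_finrank_eq <| by
      rw [Submodule.finrank_sup_of_inf_eq_bot (hTdisj hW hW' hne), hT W hW, hT W' hW', hV]
      ring
  have hsplit := card_eq_card_filter_forall_not_le_add_sum (B := {H ∈ hyperplanes F V | U ≤ H})
    (fun H hH => ne_top_of_mem_hyperplanes (mem_filter.1 hH).1) hTsup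
  have hthrough : ∀ W ∈ T, (#{H ∈ hyperplanes F V | U ⊔ W ≤ H} : ℚ) * (Nat.card F - 1) =
      (Nat.card F : ℚ) ^ (t - finrank F U) - 1 := fun W hW => by
    rw [card_hyperplanes_ge_mul, Submodule.finrank_sup_of_inf_eq_bot (hU W hW), hT W hW, hV]
    congr 2
    omega
  simp only [filter_filter, ← sup_le_iff] at hsplit
  rw [← hV, ← card_hyperplanes_ge_mul, hsplit, hyperplanesAvoiding, filter_filter]
  push_cast
  rw [add_mul, sum_mul, sum_congr rfl hthrough, sum_const, nsmul_eq_mul]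
  simp only [and_comm]
  ring

theorem IsVSPartition.card_hyperplanesAvoiding_ge_mul {P : Finset (Submodule F V)}
    (hP : IsVSPartition F P) {t : ℕ} (hV : finrank F V = 2 * t) {U : Submodule F V}
    (hU : ∀ W ∈ P, finrank F W = t → U ⊓ W = ⊥) :
    (#{H ∈ hyperplanesAvoiding {W ∈ P | finrank F W = t} | U ≤ H} : ℚ) * (Nat.card F - 1) =
      (Nat.card F : ℚ) ^ (2 * t - finrank F U) - 1 -
        dimCount F P t * ((Nat.card F : ℚ) ^ (t - finrank F U) - 1) :=
  card_hyperplanesAvoiding_ge_mul_of_pairwise hV (fun _ hW => (mem_filter.1 hW).2)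
    (fun _ hW _ hW' => hP.inf_eq_bot_s12 (mem_filter.1 hW).1 (mem_filter.1 hW').1)
    (fun W hW => hU W (mem_filter.1 hW).1 (mem_filter.1 hW).2)

theorem IsVSPartition.two_mul_dimCount_mul_le {P : Finset (Submodule F V)}
    (hP : IsVSPartition F P) {t d : ℕ} (hV : finrank F V = 2 * t) (hdt : d < t) :
    2 * (dimCount F P d : ℚ) * ((Nat.card F : ℚ) ^ (2 * t - d) - 1 -
        dimCount F P t * ((Nat.card F : ℚ) ^ (t - d) - 1)) ≤
      2 * ((Nat.card F : ℚ) ^ (2 * t) - 1 - dimCount F P t * ((Nat.card F : ℚ) ^ t - 1)) +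
        dimCount F P d * (dimCount F P d - 1) * ((Nat.card F : ℚ) ^ (2 * t - 2 * d) - 1) := by
  set S := P.filter fun D : Submodule F V => finrank F D = d
  set N := hyperplanesAvoiding (P.filter fun W : Submodule F V => finrank F W = t)
  have hScard : #S = dimCount F P d := rfl
  have hN : (#N : ℚ) * (Nat.card F - 1) =
      (Nat.card F : ℚ) ^ (2 * t) - 1 - dimCount F P t * ((Nat.card F : ℚ) ^ t - 1) := by
    simpa using hP.card_hyperplanesAvoiding_ge_mul hV (U := ⊥) (by simp)
  have hD : ∀ D ∈ S, (#{H ∈ N | D ≤ H} : ℚ) * (Nat.card F - 1) =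
      (Nat.card F : ℚ) ^ (2 * t - d) - 1 - dimCount F P t * ((Nat.card F : ℚ) ^ (t - d) - 1) := by
    intro D hD
    rw [mem_filter] at hD
    rw [hP.card_hyperplanesAvoiding_ge_mul hV fun W hW hWt => hP.inf_eq_bot_s12 hD.1 hW <| by
      rintro rfl
      exact hdt.ne (hD.2.symm.trans hWt), hD.2]
  have hpair : ∀ p ∈ S.offDiag, (#{H ∈ N | p.1 ≤ H ∧ p.2 ≤ H} : ℚ) * (Nat.card F - 1) ≤
      (Nat.card F : ℚ) ^ (2 * t - 2 * d) - 1 := by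
    intro p hp
    obtain ⟨h1, h2, hne⟩ := mem_offDiag.1 hp
    rw [mem_filter] at h1 h2
    simp only [← sup_le_iff]
    convert card_hyperplanesAvoiding_ge_mul_le _ (p.1 ⊔ p.2) using 3
    rw [Submodule.finrank_sup_of_inf_eq_bot (hP.inf_eq_bot_s12 h1.1 h2.1 hne), h1.2, h2.2, hV, two_mul d]
  have hbonf : 2 * ∑ D ∈ S, (#{H ∈ N | D ≤ H} : ℚ) ≤
      2 * #N + ∑ p ∈ S.offDiag, (#{H ∈ N | p.1 ≤ H ∧ p.2 ≤ H} : ℚ) := by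
    exact_mod_cast two_mul_sum_card_filter_le (· ≤ ·) S N
  calc 2 * (dimCount F P d : ℚ) * ((Nat.card F : ℚ) ^ (2 * t - d) - 1 -
        dimCount F P t * ((Nat.card F : ℚ) ^ (t - d) - 1))
      = (2 * ∑ D ∈ S, (#{H ∈ N | D ≤ H} : ℚ)) * (Nat.card F - 1) := by
        rw [mul_assoc _ (∑ _ ∈ S, _), sum_mul, sum_congr rfl hD, sum_const, nsmul_eq_mul, hScard,
          mul_assoc]
    _ ≤ (2 * #N + ∑ p ∈ S.offDiag, (#{H ∈ N | p.1 ≤ H ∧ p.2 ≤ H} : ℚ)) * (Nat.card F - 1) :=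
        mul_le_mul_of_nonneg_right hbonf (sub_nonneg.2 (by exact_mod_cast Finite.card_pos))
    _ = 2 * (#N * (Nat.card F - 1)) +
          ∑ p ∈ S.offDiag, #{H ∈ N | p.1 ≤ H ∧ p.2 ≤ H} * ((Nat.card F : ℚ) - 1) := by
        rw [add_mul, sum_mul, mul_assoc]
    _ ≤ 2 * (#N * (Nat.card F - 1)) + ∑ p ∈ S.offDiag, ((Nat.card F : ℚ) ^ (2 * t - 2 * d) - 1) :=
        add_le_add_right (sum_le_sum hpair) _
    _ = _ := by
        rw [hN, sum_const, nsmul_eq_mul, offDiag_card, Nat.cast_sub (Nat.le_mul_self _), hScard]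
        push_cast
        ring

end Hyperplanes

theorem stmt12_general (q t d : ℕ) (F V : Type*) [Field F] [Fintype F] [AddCommGroup V]
    [Module F V] [FiniteDimensional F V] (hq : Fintype.card F = q)
    (hV : Module.finrank F V = 2 * t)
    (P : Finset (Submodule F V)) (hP : IsVSPartition F P)
    (a : ℤ) (ha : (dimCount F P t : ℤ) = (q : ℤ) ^ t + 1 - a)
    (hd2 : d < t)
    (hlt : (dimCount F P d : ℚ) < ((q : ℚ) ^ t - 1) / ((q : ℚ) ^ (t - d) - 1)) :
    (dimCount F P d : ℚ) - Rq q t d (dimCount F P d) ≤ (a : ℚ) := by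
  rw [← Nat.card_eq_fintype_card] at hq
  subst hq
  have hr : (1 : ℚ) < (Nat.card F : ℚ) ^ (t - d) :=
    one_lt_pow₀ (by exact_mod_cast Finite.one_lt_card) (by omega)
  have hden := (lt_div_iff₀ (sub_pos.2 hr)).1 hlt
  have hmt : (dimCount F P t : ℚ) = (Nat.card F : ℚ) ^ t + 1 - a := by exact_mod_cast ha
  have key := hP.two_mul_dimCount_mul_le hV hd2
  set x : ℚ := (Nat.card F : ℚ)
  have e0 : x ^ (2 * t) = x ^ t * x ^ t := by rw [← pow_add, two_mul]
  have e1 : x ^ (2 * t - d) = x ^ t * x ^ (t - d) := by rw [← pow_add]; congr 1; omega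
  have e2 : x ^ (2 * t - 2 * d) = x ^ (t - d) * x ^ (t - d) := by rw [← pow_add]; congr 1; omega
  rw [hmt, e0, e1, e2] at key
  rw [Rq, e2]
  exact sub_div_le_of_two_mul_le (by linarith) key

/-- Theorem: if `m_d < (q^t - 1)/(q^{t-d} - 1)`, then `a ≥ m_d - R_q(t, d, m_d)`. -/
theorem stmt12 (q t d : ℕ) (F V : Type*) [Field F] [Fintype F] [AddCommGroup V]
    [Module F V] [FiniteDimensional F V] (hq : Fintype.card F = q)
    (hV : Module.finrank F V = 2 * t)
    (P : Finset (Submodule F V)) (hP : IsVSPartition F P)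
    (a : ℤ) (ha : (dimCount F P t : ℤ) = (q : ℤ) ^ t + 1 - a)
    (hd1 : 1 ≤ d) (hd2 : d < t) (hmd : 0 < dimCount F P d)
    (hlt : (dimCount F P d : ℚ) < ((q : ℚ) ^ t - 1) / ((q : ℚ) ^ (t - d) - 1)) :
    (dimCount F P d : ℚ) - Rq q t d (dimCount F P d) ≤ (a : ℚ) :=
  stmt12_general q t d F V hq hV P hP a ha hd2 hlt
end

section
/- Let ᾱ and ᾱ' be two nonzero E-linear combinations of α_1, …, α_l (i.e. elements of Ā) such that ᾱ/ᾱ' ∉ E. Then ᾱK ∩ ᾱ'K = {0}. -/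
/-!
If a nonzero `x` lies in `bK ∩ b'K`, then `b / b' ∈ K`. Writing `b = ∑ eᵢ αᵢ` and
`b' = ∑ e'ᵢ αᵢ` with `eᵢ, e'ᵢ ∈ E`, the relation `b = (b / b') b'` is a relation with
coefficients in `K`, so linear independence over `K` gives `eᵢ = (b / b') e'ᵢ` for all `i`;
choosing `i` with `e'ᵢ ≠ 0` shows `b / b' = eᵢ / e'ᵢ ∈ E`.
-/

open Submodule

theorem Subfield.div_mem_of_mul_eq_mul {F : Type*} [Field F] {K : Subfield F}
    {b b' c c' : F} (hc : c ∈ K) (hc' : c' ∈ K) (h : b * c = b' * c') (h0 : b * c ≠ 0) :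
    b / b' ∈ K := by
  have hc0 : c ≠ 0 := right_ne_zero_of_mul h0
  have hb'0 : b' ≠ 0 := left_ne_zero_of_mul (h ▸ h0)
  have : b / b' = c' / c := by
    rw [div_eq_div_iff hb'0 hc0, h, mul_comm]
  exact this ▸ K.div_mem hc' hc

theorem Subfield.div_mem_of_div_mem_of_mem_span {F ι : Type*} [Field F] [Fintype ι]
    {E K : Subfield F} (hEK : E ≤ K) {α : ι → F} (hα : LinearIndependent K α) {b b' : F}
    (hb : b ∈ span E (Set.range α)) (hb' : b' ∈ span E (Set.range α)) (hdivK : b / b' ∈ K) :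
    b / b' ∈ E := by
  by_cases hb'0 : b' = 0
  · simp [hb'0]
  obtain ⟨e, rfl⟩ := (mem_span_range_iff_exists_fun E).mp hb
  obtain ⟨e', rfl⟩ := (mem_span_range_iff_exists_fun E).mp hb'
  set lam := (∑ i, e i • α i) / ∑ i, e' i • α i
  have hcoeff : ∀ i, (e i : F) = lam * e' i := by
    have hrel : ∑ i, (⟨e i, hEK (e i).2⟩ : K) • α i =
        ∑ i, (⟨lam, hdivK⟩ * ⟨e' i, hEK (e' i).2⟩ : K) • α i := by
      simp only [Subfield.smul_def, smul_eq_mul, MulMemClass.mk_mul_mk, mul_assoc,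
        ← Finset.mul_sum]
      exact (div_mul_cancel₀ _ hb'0).symm
    exact fun i => congrArg Subtype.val (Fintype.linearIndependent_iffₛ.mp hα _ _ hrel i)
  obtain ⟨i, hi⟩ : ∃ i, (e' i : F) ≠ 0 := by
    by_contra! h
    exact hb'0 (Finset.sum_eq_zero fun i _ => by simp [Subfield.smul_def, h i])
  have : lam = e i / e' i := by
    rw [hcoeff i, mul_div_cancel_right₀ _ hi]
  exact this ▸ E.div_mem (e i).2 (e' i).2

theorem stmt15_general (l : ℕ)
    (F : Type*) [Field F]
    (K E : Subfield F)
    (hEK : E ≤ K)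
    (α : Fin l → F) (hα : LinearIndependent ↥K α)
    (b b' : F)
    (hb : b ∈ Submodule.span ↥E (Set.range α))
    (hb' : b' ∈ Submodule.span ↥E (Set.range α))
    (hdiv : b / b' ∉ E) :
    {x : F | ∃ c ∈ K, x = b * c} ∩ {x : F | ∃ c ∈ K, x = b' * c} = {0} := by
  ext x
  constructor
  · rintro ⟨⟨c, hc, rfl⟩, c', hc', hx⟩
    by_contra hx0
    exact hdiv (Subfield.div_mem_of_div_mem_of_mem_span hEK hα hb hb'
      (Subfield.div_mem_of_mul_eq_mul hc hc' hx hx0))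
  · rintro rfl
    exact ⟨⟨0, K.zero_mem, (mul_zero b).symm⟩, 0, K.zero_mem, (mul_zero b').symm⟩

/-- Lemma: two `E`-linear combinations of `α_1, ..., α_l` which are not parallel
(i.e. whose quotient is not in `E`) generate `K`-multiplication cosets intersecting
trivially. -/
theorem stmt15 (q t k l : ℕ) (hq : IsPrimePow q) (ht : 1 ≤ t) (hk : 2 ≤ k) (hl : 1 ≤ l)
    (F : Type*) [Field F] (hF : Nat.card F = q ^ (k * t))
    (K E : Subfield F) (hK : Nat.card K = q ^ t) (hE : Nat.card E = q)
    (hEK : E ≤ K)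
    (α : Fin l → F) (hα : LinearIndependent ↥K α)
    (b b' : F)
    (hb : b ∈ Submodule.span ↥E (Set.range α)) (hb0 : b ≠ 0)
    (hb' : b' ∈ Submodule.span ↥E (Set.range α)) (hb'0 : b' ≠ 0)
    (hdiv : b / b' ∉ E) :
    {x : F | ∃ c ∈ K, x = b * c} ∩ {x : F | ∃ c ∈ K, x = b' * c} = {0} :=
  stmt15_general l F K E hEK α hα b b' hb hb' hdiv
end
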